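/- arXiv:2507.19162 — 7 statements merged into one kernel-verified Lean document; each statement's English description precedes it below -/
import Mathlib

section
/- A compact Hausdorff topological semigroup which is algebraically a group is a topological group, i.e., the inversion map x ↦ x⁻¹ is continuous. -/
/-!
The graph of `inv` is the set `{(x, y) | x * y = e}`, closed because `S` is Hausdorff, and a
map into a compact space with closed graph is continuous: the preimage of a closed set `C` is
the projection of the closed set `graph ∩ (S × C)`, and projecting away a compact factor is a
closed map.
-/

theorem continuous_of_isClosed_graph_of_compactSpace {X Y : Type*} [TopologicalSpace X]
    [TopologicalSpace Y] [CompactSpace Y] {f : X → Y}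
    (hf : IsClosed {p : X × Y | f p.1 = p.2}) : Continuous f := by
  refine continuous_iff_isClosed.2 fun C hC => ?_
  have hpre : f ⁻¹' C = Prod.fst '' ({p : X × Y | f p.1 = p.2} ∩ Prod.snd ⁻¹' C) := by
    ext x
    constructor
    · exact fun hx => ⟨(x, f x), ⟨rfl, hx⟩, rfl⟩
    · rintro ⟨p, ⟨hp, hpC⟩, rfl⟩
      rwa [Set.mem_preimage, hp]
  rw [hpre]
  exact isClosedMap_fst_of_compactSpace _ (hf.inter (hC.preimage continuous_snd))

theorem inv_eq_of_mul_eq_identity {S : Type*} [Semigroup S] {e : S}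
    (he : ∀ x : S, e * x = x ∧ x * e = x) {inv : S → S} (hinv : ∀ x : S, inv x * x = e)
    {x y : S} (h : x * y = e) : inv x = y :=
  calc inv x = inv x * e := ((he _).2).symm
    _ = inv x * x * y := by rw [mul_assoc, h]
    _ = y := by rw [hinv, (he y).1]

theorem compact_semigroup_group_has_continuous_inv
    {S : Type*} [Semigroup S] [TopologicalSpace S] [CompactSpace S] [T2Space S]
    [ContinuousMul S]
    (e : S) (he : ∀ x : S, e * x = x ∧ x * e = x)
    (inv : S → S) (hinv : ∀ x : S, x * inv x = e ∧ inv x * x = e) :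
    Continuous inv := by
  have hgraph : {p : S × S | inv p.1 = p.2} = {p | p.1 * p.2 = e} := by
    ext ⟨x, y⟩
    refine ⟨?_, inv_eq_of_mul_eq_identity he fun x => (hinv x).2⟩
    rintro (rfl : inv x = y)
    exact (hinv x).1
  apply continuous_of_isClosed_graph_of_compactSpace
  rw [hgraph]
  exact isClosed_eq continuous_mul continuous_const
end

section
/- A compact Hausdorff monoid whose only idempotent is the identity is a group: every element has a two-sided inverse. -/
/-! The principal right ideal `x * M` of a compact monoid is a nonempty compact subsemigroup, so
by the Ellis–Numakura lemma it contains an idempotent, which must be `1`; hence `x` has a right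
inverse. Symmetrically the left ideal `M * x` gives a left inverse, and the two coincide. -/

section

variable {M : Type*} [Monoid M] [TopologicalSpace M] [T2Space M]

theorem one_mem_of_isCompact_of_mul_mem (hcont : ∀ r : M, Continuous (· * r))
    (h : ∀ e : M, e * e = e → e = 1) {s : Set M} (hne : s.Nonempty) (hs : IsCompact s)
    (hmul : ∀ a ∈ s, ∀ b ∈ s, a * b ∈ s) : (1 : M) ∈ s := by
  obtain ⟨e, he, hee⟩ := exists_idempotent_in_compact_subsemigroup hcont s hne hs hmul
  exact h e hee ▸ he

variable [CompactSpace M] [ContinuousMul M]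

theorem exists_mul_eq_one_of_idempotent_eq_one (h : ∀ e : M, e * e = e → e = 1) (x : M) :
    ∃ y, x * y = 1 := by
  refine one_mem_of_isCompact_of_mul_mem continuous_mul_const h (Set.range_nonempty _)
    (isCompact_range (continuous_const_mul x)) ?_
  rintro _ ⟨a, rfl⟩ _ ⟨b, rfl⟩
  exact ⟨a * x * b, by simp only [mul_assoc]⟩

theorem exists_mul_eq_one_of_idempotent_eq_one' (h : ∀ e : M, e * e = e → e = 1) (x : M) :
    ∃ y, y * x = 1 := by
  refine one_mem_of_isCompact_of_mul_mem continuous_mul_const h (Set.range_nonempty _)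
    (isCompact_range (continuous_mul_const x)) ?_
  rintro _ ⟨a, rfl⟩ _ ⟨b, rfl⟩
  exact ⟨a * x * b, by simp only [mul_assoc]⟩

end

theorem compact_monoid_unique_idempotent_is_group
    {M : Type*} [Monoid M] [TopologicalSpace M] [CompactSpace M] [T2Space M]
    [ContinuousMul M]
    (h : ∀ e : M, e * e = e → e = 1) :
    ∀ x : M, ∃ y : M, x * y = 1 ∧ y * x = 1 := by
  intro x
  obtain ⟨y, hxy⟩ := exists_mul_eq_one_of_idempotent_eq_one h x
  obtain ⟨z, hzx⟩ := exists_mul_eq_one_of_idempotent_eq_one' h x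
  exact ⟨y, hxy, left_inv_eq_right_inv hzx hxy ▸ hzx⟩
end

section
/- Swelling Lemma: Let S be a compact Hausdorff topological semigroup and A a nonempty closed subset of S. If t ∈ A and A ⊆ tA, then A = tA. -/
/-!
If `A ⊆ tA`, the elements `s` with `A ⊆ sA` form a subsemigroup, which is closed because `A` is
compact; hence it contains the compact semigroup `Γ` topologically generated by `t`, and with it an
idempotent `e` of `Γ`. Such an `e` fixes `A` pointwise, and `e = e * e ∈ tΓ`, say `e = tu`. For
`a ∈ A` write `a = ub` with `b ∈ A`; then `ta = eb = b ∈ A`.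
-/

open Set

section

variable {S : Type*} [Semigroup S]

def swellers (A : Set S) : Subsemigroup S where
  carrier := {s | A ⊆ (s * ·) '' A}
  mul_mem' {s s'} hs hs' b hb := by
    obtain ⟨c, hc, rfl⟩ := hs hb
    obtain ⟨d, hd, rfl⟩ := hs' hc
    exact ⟨d, hd, mul_assoc s s' d⟩

theorem mem_swellers {A : Set S} {s : S} : s ∈ swellers A ↔ A ⊆ (s * ·) '' A := Iff.rfl

theorem mul_eq_self_of_isIdempotentElem_mem_swellers {A : Set S} {e : S}
    (he : IsIdempotentElem e) (heA : e ∈ swellers A) {b : S} (hb : b ∈ A) : e * b = b := by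
  obtain ⟨c, -, rfl⟩ := heA hb
  rw [← mul_assoc, he.eq]

variable [TopologicalSpace S] [ContinuousMul S]

theorem isClosed_setOf_mem_image_mul [T1Space S] {A : Set S} (hA : IsCompact A) (b : S) :
    IsClosed {s : S | b ∈ (s * ·) '' A} := by
  have : CompactSpace A := isCompact_iff_compactSpace.mp hA
  have hclosed : IsClosed {p : S × A | p.1 * p.2 = b} :=
    isClosed_singleton.preimage (continuous_fst.mul (continuous_subtype_val.comp continuous_snd))
  convert isClosedMap_fst_of_compactSpace _ hclosed using 1
  ext s
  simp

theorem isClosed_swellers [T1Space S] {A : Set S} (hA : IsCompact A) :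
    IsClosed (swellers A : Set S) := by
  have : (swellers A : Set S) = ⋂ b ∈ A, {s : S | b ∈ (s * ·) '' A} := by
    ext s
    simp only [SetLike.mem_coe, mem_swellers, mem_iInter]
    rfl
  rw [this]
  exact isClosed_biInter fun b _ => isClosed_setOf_mem_image_mul hA b

/-- In the closure `Γ` of `{t, t², t³, …}` every product lies in `tΓ`: `Γ ⊆ {t} ∪ tΓ`, since the
right-hand side is a closed subsemigroup containing `t`. -/
theorem mul_mem_image_mul_topologicalClosure_closure_singleton [CompactSpace S] [T2Space S]
    (t : S) {g h : S} (hg : g ∈ (Subsemigroup.closure {t}).topologicalClosure)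
    (hh : h ∈ (Subsemigroup.closure {t}).topologicalClosure) :
    g * h ∈ (t * ·) '' ((Subsemigroup.closure {t}).topologicalClosure : Set S) := by
  set Γ := (Subsemigroup.closure {t}).topologicalClosure
  have ht : t ∈ Γ := Subsemigroup.le_topologicalClosure _ (Subsemigroup.subset_closure rfl)
  set T := insert t ((t * ·) '' (Γ : Set S))
  have hTΓ : ∀ x ∈ T, ∀ y ∈ Γ, x * y ∈ (t * ·) '' (Γ : Set S) := by
    rintro x (rfl | ⟨g, hg, rfl⟩) y hy
    · exact ⟨y, hy, rfl⟩
    · exact ⟨g * y, Γ.mul_mem hg hy, (mul_assoc t g y).symm⟩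
  have hT_subset : T ⊆ Γ := insert_subset ht (image_subset_iff.2 fun g hg => Γ.mul_mem ht hg)
  let T' : Subsemigroup S :=
    { carrier := T
      mul_mem' := fun hx hy => subset_insert _ _ (hTΓ _ hx _ (hT_subset hy)) }
  have hT_closed : IsClosed (T' : Set S) :=
    (((Subsemigroup.isClosed_topologicalClosure _).isCompact.image
      (continuous_const_mul t)).insert t).isClosed
  have hΓT : Γ ≤ T' := Subsemigroup.topologicalClosure_minimal _
    (Subsemigroup.closure_le.2 (singleton_subset_iff.2 (mem_insert t _))) hT_closed
  exact hTΓ g (hΓT hg) h hh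

end

theorem swelling_lemma_general
    {S : Type*} [Semigroup S] [TopologicalSpace S] [CompactSpace S] [T2Space S]
    [ContinuousMul S]
    (A : Set S) (hA : IsClosed A)
    (t : S) (h : A ⊆ (fun a => t * a) '' A) :
    A = (fun a => t * a) '' A := by
  refine h.antisymm ?_
  rintro _ ⟨a, ha, rfl⟩
  set Γ := (Subsemigroup.closure {t}).topologicalClosure
  have hΓ : Γ ≤ swellers A :=
    Subsemigroup.topologicalClosure_minimal _ (Subsemigroup.closure_le.2 (singleton_subset_iff.2 h))
      (isClosed_swellers hA.isCompact)
  obtain ⟨e, heΓ, he⟩ := exists_idempotent_in_compact_subsemigroup continuous_mul_const (Γ : Set S)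
    ⟨t, Subsemigroup.le_topologicalClosure _ (Subsemigroup.subset_closure rfl)⟩
    (Subsemigroup.isClosed_topologicalClosure _).isCompact fun x hx y hy => Γ.mul_mem hx hy
  obtain ⟨u, huΓ, htu⟩ := mul_mem_image_mul_topologicalClosure_closure_singleton t heΓ heΓ
  obtain ⟨b, hb, rfl⟩ := hΓ huΓ ha
  have heb : e * b = b := mul_eq_self_of_isIdempotentElem_mem_swellers he (hΓ heΓ) hb
  simpa only [← mul_assoc, htu, he, heb] using hb

theorem swelling_lemma
    {S : Type*} [Semigroup S] [TopologicalSpace S] [CompactSpace S] [T2Space S]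
    [ContinuousMul S]
    (A : Set S) (hne : A.Nonempty) (hA : IsClosed A)
    (t : S) (ht : t ∈ A) (h : A ⊆ (fun a => t * a) '' A) :
    A = (fun a => t * a) '' A :=
  swelling_lemma_general A hA t h
end

section
/- If S and T are semigroups with T a regular subsemigroup of S, then Green's relation 𝓛 on T equals the restriction of Green's relation 𝓛 on S to T × T: for a, b ∈ T, Sa ∪ {a} = Sb ∪ {b} as subsets computed in T iff computed in S. -/
/-! A regular element `d` of `T` satisfies `d = d x d` with `x ∈ T`, so any left multiple `s d ∈ T`
with `s ∈ S` is also the left multiple `(s d x) d` with `s d x ∈ T`. Hence, for `c, d ∈ T`, the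
relation "`c ∈ S¹d`" agrees with "`c ∈ T¹d`", and `𝓛` is the symmetric part of either relation. -/

namespace Semigroup

variable {S : Type*} [Semigroup S]

/-- `P¹a`: the principal left ideal of `a` computed in the subsemigroup `P`. -/
def principalLeftIdeal (P : Set S) (a : S) : Set S :=
  insert a {x | ∃ s ∈ P, x = s * a}

theorem principalLeftIdeal_univ (a : S) :
    principalLeftIdeal Set.univ a = insert a {x | ∃ s : S, x = s * a} := by
  simp [principalLeftIdeal]

theorem mem_principalLeftIdeal_self (P : Set S) (a : S) : a ∈ principalLeftIdeal P a :=
  Set.mem_insert a _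

theorem principalLeftIdeal_subset_iff {P : Set S} (hP : ∀ x ∈ P, ∀ y ∈ P, x * y ∈ P)
    {a b : S} : principalLeftIdeal P a ⊆ principalLeftIdeal P b ↔ a ∈ principalLeftIdeal P b := by
  refine ⟨fun h => h (mem_principalLeftIdeal_self P a), ?_⟩
  rintro (rfl | ⟨t, ht, rfl⟩) x (rfl | ⟨s, hs, rfl⟩)
  · exact mem_principalLeftIdeal_self P _
  · exact Or.inr ⟨s, hs, rfl⟩
  · exact Or.inr ⟨t, ht, rfl⟩
  · exact Or.inr ⟨s * t, hP s hs t ht, (mul_assoc s t b).symm⟩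

theorem principalLeftIdeal_eq_iff {P : Set S} (hP : ∀ x ∈ P, ∀ y ∈ P, x * y ∈ P) {a b : S} :
    principalLeftIdeal P a = principalLeftIdeal P b ↔
      a ∈ principalLeftIdeal P b ∧ b ∈ principalLeftIdeal P a := by
  rw [Set.Subset.antisymm_iff, principalLeftIdeal_subset_iff hP, principalLeftIdeal_subset_iff hP]

theorem mem_principalLeftIdeal_iff_univ {T : Set S} (hT : ∀ x ∈ T, ∀ y ∈ T, x * y ∈ T)
    {c d : S} (hc : c ∈ T) (hd : ∃ x ∈ T, d * x * d = d) :
    c ∈ principalLeftIdeal T d ↔ c ∈ principalLeftIdeal Set.univ d := by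
  refine ⟨fun h => h.imp_right fun ⟨s, _, hs⟩ => ⟨s, Set.mem_univ s, hs⟩, ?_⟩
  rintro (rfl | ⟨s, -, rfl⟩)
  · exact mem_principalLeftIdeal_self T _
  · obtain ⟨x, hx, hdxd⟩ := hd
    refine Or.inr ⟨s * d * x, hT _ hc x hx, ?_⟩
    calc s * d = s * (d * x * d) := by rw [hdxd]
      _ = s * d * x * d := by simp only [mul_assoc]

end Semigroup

open Semigroup in
theorem green_L_regular_subsemigroup
    {S : Type*} [Semigroup S] (T : Set S)
    (hT : ∀ x ∈ T, ∀ y ∈ T, x * y ∈ T)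
    (hreg : ∀ t ∈ T, ∃ x ∈ T, t * x * t = t) :
    ∀ a ∈ T, ∀ b ∈ T,
      ((insert a {x | ∃ s ∈ T, x = s * a} = insert b {x | ∃ s ∈ T, x = s * b}) ↔
       (insert a {x | ∃ s : S, x = s * a} = insert b {x | ∃ s : S, x = s * b})) := by
  intro a ha b hb
  have hUniv : ∀ x ∈ (Set.univ : Set S), ∀ y ∈ (Set.univ : Set S), x * y ∈ Set.univ :=
    fun _ _ _ _ => Set.mem_univ _
  rw [← principalLeftIdeal_univ, ← principalLeftIdeal_univ]
  change principalLeftIdeal T a = principalLeftIdeal T b ↔ _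
  rw [principalLeftIdeal_eq_iff hT, principalLeftIdeal_eq_iff hUniv,
    mem_principalLeftIdeal_iff_univ hT ha (hreg b hb),
    mem_principalLeftIdeal_iff_univ hT hb (hreg a ha)]
end

section
/- Every idempotent in a Rees matrix semigroup over a group is primitive: if e, f are idempotents of M(I, G, Λ, P) with ef = fe = f, then e = f. -/
/-- Rees matrix multiplication on `I × G × Λ` with sandwich map `P`. -/
def reesMulM {G : Type*} [Group G] {I Λ : Type*} (P : Λ × I → G)
    (a b : I × G × Λ) : I × G × Λ :=
  (a.1, a.2.1 * P (a.2.2, b.1) * b.2.1, b.2.2)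

/-! An idempotent `(i, g, λ)` satisfies `g = P (λ, i)⁻¹`, so it is determined by its row index `i`
and column index `λ`. The product `e f` has the row index of `e` and `f e` the column index of
`e`, so `e f = f = f e` forces `e` and `f` to share both indices. -/

section ReesMatrix

variable {G : Type*} [Group G] {I Λ : Type*} {P : Λ × I → G} {e f : I × G × Λ}

theorem fst_eq_of_reesMulM_eq_right (h : reesMulM P e f = f) : e.1 = f.1 :=
  (congrArg Prod.fst h :)

theorem snd_snd_eq_of_reesMulM_eq_left (h : reesMulM P f e = f) : e.2.2 = f.2.2 :=
  (congrArg (·.2.2) h :)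

theorem snd_fst_eq_inv_of_reesMulM_self (he : reesMulM P e e = e) :
    e.2.1 = (P (e.2.2, e.1))⁻¹ := by
  have hg : e.2.1 * P (e.2.2, e.1) * e.2.1 = 1 * e.2.1 :=
    (congrArg (·.2.1) he).trans (one_mul _).symm
  exact eq_inv_of_mul_eq_one_left (mul_right_cancel hg)

theorem reesMulM_idempotent_ext (he : reesMulM P e e = e) (hf : reesMulM P f f = f)
    (h₁ : e.1 = f.1) (h₂ : e.2.2 = f.2.2) : e = f := by
  have hg : e.2.1 = f.2.1 := by
    rw [snd_fst_eq_inv_of_reesMulM_self he, snd_fst_eq_inv_of_reesMulM_self hf, h₁, h₂]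
  exact Prod.ext h₁ (Prod.ext hg h₂)

end ReesMatrix

theorem rees_matrix_idempotents_primitive_general
    {G : Type*} [Group G] {I Λ : Type*}
    (P : Λ × I → G) (e f : I × G × Λ)
    (he : reesMulM P e e = e) (hf : reesMulM P f f = f)
    (h1 : reesMulM P e f = f) (h2 : reesMulM P f e = f) :
    e = f :=
  reesMulM_idempotent_ext he hf (fst_eq_of_reesMulM_eq_right h1) (snd_snd_eq_of_reesMulM_eq_left h2)

theorem rees_matrix_idempotents_primitive
    {G : Type*} [Group G] {I Λ : Type*} [Nonempty I] [Nonempty Λ]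
    (P : Λ × I → G) (e f : I × G × Λ)
    (he : reesMulM P e e = e) (hf : reesMulM P f f = f)
    (h1 : reesMulM P e f = f) (h2 : reesMulM P f e = f) :
    e = f :=
  rees_matrix_idempotents_primitive_general P e f he hf h1 h2
end

section
/- If e is an idempotent of a semigroup S such that eSe is a group (with identity e), then eS is a minimal right ideal of S, provided S is simple. -/
/-!
Since `S` is simple, every element `r` generates `S` as a two-sided ideal, so `e = a * r * b`
for some `a, b`. If moreover `r ∈ eS`, then `e = (eae)(erbe)` is a factorisation inside the group
`eSe`, where a one-sided inverse is two-sided: `e = (erbe)(eae) ∈ rS`. Hence any right ideal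
`R ⊆ eS` contains `e`, and with it all of `eS`.
-/

section

variable {S : Type*} [Semigroup S]

theorem exists_eq_mul_mul_of_simple
    (hsimple : ∀ J : Set S, J.Nonempty →
      (∀ s : S, ∀ x ∈ J, s * x ∈ J ∧ x * s ∈ J) → J = Set.univ)
    (r x : S) : ∃ a b, x = a * r * b := by
  have hJ : {x : S | ∃ a b, x = a * r * b} = Set.univ := by
    refine hsimple _ ⟨r * r * r, r, r, rfl⟩ ?_
    rintro s x ⟨a, b, rfl⟩
    exact ⟨⟨s * a, b, by simp only [mul_assoc]⟩, ⟨a, b * s, by simp only [mul_assoc]⟩⟩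
  exact hJ.ge (Set.mem_univ x)

theorem idem_mul_corner {e : S} (he : e * e = e) (s : S) : e * (e * s * e) = e * s * e := by
  simp only [← mul_assoc, he]

theorem corner_mul_idem {e : S} (he : e * e = e) (s : S) : e * s * e * e = e * s * e := by
  rw [mul_assoc, he]

theorem mul_eq_of_left_inv {e x x' y : S} (hx' : x' * e = x') (hy : e * y = y)
    (hx'x : x' * x = e) (hxy : x * y = e) : y * x = e := by
  have hyx' : y = x' := calc
    y = e * y := hy.symm
    _ = x' * (x * y) := by rw [← mul_assoc, hx'x]
    _ = x' := by rw [hxy, hx']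
  rw [hyx', hx'x]

theorem idem_mem_of_right_ideal_of_simple
    (hsimple : ∀ J : Set S, J.Nonempty →
      (∀ s : S, ∀ x ∈ J, s * x ∈ J ∧ x * s ∈ J) → J = Set.univ)
    {e : S} (he : e * e = e)
    (hgroup : ∀ x ∈ {z : S | ∃ s, z = e * s * e},
      ∃ y ∈ {z : S | ∃ s, z = e * s * e}, x * y = e ∧ y * x = e)
    {R : Set S} (hR : ∀ x ∈ R, ∀ t : S, x * t ∈ R) {r : S} (hr : r ∈ R) (her : e * r = r) :
    e ∈ R := by
  obtain ⟨a, b, hab⟩ := exists_eq_mul_mul_of_simple hsimple r e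
  have hfactor : e * a * e * (e * (r * b) * e) = e := calc
    e * a * e * (e * (r * b) * e) = e * (a * (e * (e * r)) * b) * e := by simp only [mul_assoc]
    _ = e * (a * r * b) * e := by rw [her, her]
    _ = e := by rw [← hab, he, he]
  obtain ⟨x', ⟨s, rfl⟩, -, hx'x⟩ := hgroup (e * a * e) ⟨a, rfl⟩
  have hswap :=
    mul_eq_of_left_inv (corner_mul_idem he s) (idem_mul_corner he (r * b)) hx'x hfactor
  have hmem : e = r * (b * e * (e * a * e)) := calc
    e = e * (r * b) * e * (e * a * e) := hswap.symm
    _ = e * r * (b * e * (e * a * e)) := by simp only [mul_assoc]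
    _ = r * (b * e * (e * a * e)) := by rw [her]
  exact hmem ▸ hR r hr _

end

theorem eS_minimal_right_ideal_of_simple
    {S : Type*} [Semigroup S]
    (hsimple : ∀ J : Set S, J.Nonempty →
      (∀ s : S, ∀ x ∈ J, s * x ∈ J ∧ x * s ∈ J) → J = Set.univ)
    (e : S) (he : e * e = e)
    (hgroup : ∀ x ∈ {z : S | ∃ s, z = e * s * e},
      ∃ y ∈ {z : S | ∃ s, z = e * s * e}, x * y = e ∧ y * x = e) :
    (∀ x ∈ {z : S | ∃ s, z = e * s}, ∀ t : S, x * t ∈ {z : S | ∃ s, z = e * s}) ∧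
    (∀ R : Set S, R.Nonempty → (∀ x ∈ R, ∀ t : S, x * t ∈ R) →
      R ⊆ {z : S | ∃ s, z = e * s} → R = {z : S | ∃ s, z = e * s}) := by
  refine ⟨?_, ?_⟩
  · rintro x ⟨s, rfl⟩ t
    exact ⟨s * t, mul_assoc e s t⟩
  · rintro R ⟨r, hr⟩ hR hsub
    obtain ⟨s, rfl⟩ := hsub hr
    have heR : e ∈ R :=
      idem_mem_of_right_ideal_of_simple hsimple he hgroup hR hr (by rw [← mul_assoc, he])
    refine Set.Subset.antisymm hsub ?_
    rintro _ ⟨t, rfl⟩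
    exact hR e heR t
end

section
/- In a compact Hausdorff topological semigroup S, for every idempotent e the set eSe is a compact topological group with identity e, provided S is simple. -/
/-!
In a compact Hausdorff monoid `a * b = 1` forces `b * a = 1`: the closure of `{b, b², …}` is a
compact subsemigroup, hence contains an idempotent; every `bⁿ` has the left inverse `aⁿ`, left
invertibility is a closed condition, and a left invertible idempotent is `1`. So `1` lies in that
closure, which sits inside `b` times the closure of `{1, b, b², …}`, giving a right inverse `c` of
`b`, and then `a = c`.

The corner `e S e` is a compact Hausdorff monoid with identity `e`. Simplicity of `S` writes `e` as
`p x q` for each `x ∈ e S e`, hence `e = (e p e) x (e q e)`, so `x` is a unit by Dedekind-finiteness.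
Finally, the inverse map is continuous because `Units.val` is a continuous bijection from the
compact space of units onto a Hausdorff space.
-/

section CompactMonoid

variable {M : Type*} [Monoid M]

theorem IsIdempotentElem.eq_one_of_mul_eq_one {x h : M} (hh : IsIdempotentElem h)
    (hxh : x * h = 1) : h = 1 :=
  calc h = x * h * h := by rw [hxh, one_mul]
    _ = 1 := by rw [mul_assoc, hh.eq, hxh]

theorem isUnit_of_mul_mul_eq_one [IsDedekindFiniteMonoid M] {u x v : M} (h : u * x * v = 1) :
    IsUnit x :=
  (IsUnit.mul_iff.mp (IsUnit.mul_iff.mp (h ▸ isUnit_one)).1).2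

variable [TopologicalSpace M] [CompactSpace M] [T2Space M] [ContinuousMul M]

theorem isClosed_setOf_exists_mul_eq_one : IsClosed {y : M | ∃ x, x * y = 1} := by
  have hgraph : IsClosed {p : M × M | p.1 * p.2 = 1} := isClosed_eq (by fun_prop) continuous_const
  convert isClosedMap_snd_of_compactSpace _ hgraph using 1
  ext y
  simp

theorem one_mem_closure_range_pow_succ {a b : M} (hab : a * b = 1) :
    (1 : M) ∈ closure (Set.range fun n : ℕ ↦ b ^ (n + 1)) := by
  set Γ := closure (Set.range fun n : ℕ ↦ b ^ (n + 1))
  have hΓmul : ∀ x ∈ Γ, ∀ y ∈ Γ, x * y ∈ Γ := by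
    intro x hx y hy
    refine map_mem_closure₂ continuous_mul hx hy ?_
    rintro _ ⟨m, rfl⟩ _ ⟨n, rfl⟩
    exact ⟨m + n + 1, by rw [← pow_add]; ring_nf⟩
  obtain ⟨h, hhΓ, hh⟩ := exists_idempotent_in_compact_subsemigroup continuous_mul_const Γ
    ⟨b, subset_closure ⟨0, pow_one b⟩⟩ isClosed_closure.isCompact hΓmul
  have hΓ : Γ ⊆ {y : M | ∃ x, x * y = 1} :=
    closure_minimal (by rintro _ ⟨n, rfl⟩; exact ⟨_, pow_mul_pow_eq_one _ hab⟩)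
      isClosed_setOf_exists_mul_eq_one
  obtain ⟨x, hxh⟩ := hΓ hhΓ
  rwa [← IsIdempotentElem.eq_one_of_mul_eq_one hh hxh]

instance isDedekindFiniteMonoid_of_compactSpace : IsDedekindFiniteMonoid M where
  mul_eq_one_symm {a b} hab := by
    set K := closure (Set.range fun n : ℕ ↦ b ^ n)
    have hbK : closure (Set.range fun n : ℕ ↦ b ^ (n + 1)) ⊆ (b * ·) '' K :=
      closure_minimal
        (by rintro _ ⟨n, rfl⟩; exact ⟨b ^ n, subset_closure ⟨n, rfl⟩, (pow_succ' b n).symm⟩)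
        (isClosed_closure.isCompact.image (continuous_const_mul b)).isClosed
    obtain ⟨c, -, hbc⟩ := hbK (one_mem_closure_range_pow_succ hab)
    rwa [left_inv_eq_right_inv hab hbc]

theorem continuous_isUnit_unit_inv (h : ∀ a : M, IsUnit a) :
    Continuous fun a ↦ ((h a).unit⁻¹ : Mˣ).val := by
  have hval : Topology.IsClosedEmbedding (Units.val : Mˣ → M) :=
    Units.continuous_val.isClosedEmbedding Units.val_injective
  have hunit : Continuous fun a ↦ (h a).unit := hval.continuous_iff.2 continuous_id
  exact Units.continuous_coe_inv.comp hunit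

end CompactMonoid

theorem exists_mul_mul_eq_of_simple {S : Type*} [Semigroup S]
    (hsimple : ∀ J : Set S, J.Nonempty →
      (∀ s : S, ∀ x ∈ J, s * x ∈ J ∧ x * s ∈ J) → J = Set.univ)
    (x y : S) : ∃ p q, p * x * q = y := by
  have hideal : {z : S | ∃ p q, p * x * q = z} = Set.univ := by
    refine hsimple _ ⟨x * x * x, x, x, rfl⟩ ?_
    rintro s _ ⟨p, q, rfl⟩
    exact ⟨⟨s * p, q, by simp only [mul_assoc]⟩, ⟨p, q * s, by simp only [mul_assoc]⟩⟩
  exact hideal.ge (Set.mem_univ y)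

theorem Subsemigroup.isCompact_corner {S : Type*} [Semigroup S] [TopologicalSpace S]
    [CompactSpace S] [ContinuousMul S] (e : S) : IsCompact (Subsemigroup.corner e : Set S) :=
  isCompact_range (by fun_prop)

namespace IsIdempotentElem

variable {S : Type*} [Semigroup S] {e : S} (idem : IsIdempotentElem e)

instance : Monoid idem.Corner where
  __ : Semigroup idem.Corner := inferInstanceAs <| Semigroup (Subsemigroup.corner e)
  one := ⟨e, e, by simp_rw [idem.eq]⟩
  one_mul r := Subtype.ext ((Subsemigroup.mem_corner_iff idem).mp r.2).1
  mul_one r := Subtype.ext ((Subsemigroup.mem_corner_iff idem).mp r.2).2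

variable [TopologicalSpace S]

instance : TopologicalSpace idem.Corner :=
  inferInstanceAs <| TopologicalSpace (Subsemigroup.corner e)

instance [T2Space S] : T2Space idem.Corner :=
  inferInstanceAs <| T2Space (Subsemigroup.corner e)

instance [ContinuousMul S] : ContinuousMul idem.Corner :=
  inferInstanceAs <| ContinuousMul (Subsemigroup.corner e)

instance [CompactSpace S] [ContinuousMul S] : CompactSpace idem.Corner :=
  isCompact_iff_compactSpace.mp (Subsemigroup.isCompact_corner e)

end IsIdempotentElem

theorem IsIdempotentElem.exists_mul_mul_eq_one_of_simple {S : Type*} [Semigroup S] {e : S}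
    (idem : IsIdempotentElem e)
    (hsimple : ∀ J : Set S, J.Nonempty →
      (∀ s : S, ∀ x ∈ J, s * x ∈ J ∧ x * s ∈ J) → J = Set.univ)
    (x : idem.Corner) : ∃ u v : idem.Corner, u * x * v = 1 := by
  obtain ⟨p, q, hpq⟩ := exists_mul_mul_eq_of_simple hsimple x.1 e
  have hx := (Subsemigroup.mem_corner_iff idem).mp x.2
  refine ⟨⟨e * p * e, p, rfl⟩, ⟨e * q * e, q, rfl⟩, Subtype.ext ?_⟩
  calc e * p * e * x.1 * (e * q * e) = e * (p * x.1 * q) * e := by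
        simp only [mul_assoc]
        rw [← mul_assoc e x.1, hx.1, ← mul_assoc x.1 e, hx.2]
    _ = e := by rw [hpq, idem.eq, idem.eq]

theorem eSe_compact_topological_group_of_simple
    {S : Type*} [Semigroup S] [TopologicalSpace S] [CompactSpace S] [T2Space S]
    [ContinuousMul S]
    (hsimple : ∀ J : Set S, J.Nonempty →
      (∀ s : S, ∀ x ∈ J, s * x ∈ J ∧ x * s ∈ J) → J = Set.univ)
    (e : S) (he : e * e = e) :
    IsCompact {z : S | ∃ s, z = e * s * e} ∧
    (∀ x ∈ {z : S | ∃ s, z = e * s * e}, ∀ y ∈ {z : S | ∃ s, z = e * s * e},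
      x * y ∈ {z : S | ∃ s, z = e * s * e}) ∧
    (∀ x ∈ {z : S | ∃ s, z = e * s * e}, e * x = x ∧ x * e = x) ∧
    ∃ inv : {z : S | ∃ s, z = e * s * e} → {z : S | ∃ s, z = e * s * e},
      (∀ x, x.1 * (inv x).1 = e ∧ (inv x).1 * x.1 = e) ∧ Continuous inv := by
  have idem : IsIdempotentElem e := he
  have hunit (x : idem.Corner) : IsUnit x :=
    have ⟨_, _, h⟩ := idem.exists_mul_mul_eq_one_of_simple hsimple x
    isUnit_of_mul_mul_eq_one h
  have hcorner : {z : S | ∃ s, z = e * s * e} = Subsemigroup.corner e :=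
    Set.ext fun _ ↦ exists_congr fun _ ↦ eq_comm
  rw [hcorner]
  refine ⟨Subsemigroup.isCompact_corner e, fun x hx y hy ↦ mul_mem hx hy,
    fun x hx ↦ (Subsemigroup.mem_corner_iff idem).mp hx,
    fun x ↦ ((hunit x).unit⁻¹ : idem.Corner ˣ).val, fun x ↦ ⟨?_, ?_⟩,
    continuous_isUnit_unit_inv hunit⟩
  · exact congrArg Subtype.val (hunit x).mul_val_inv
  · exact congrArg Subtype.val (hunit x).val_inv_mul
end
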